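/- arXiv:1210.5848 — 2 statements merged into one kernel-verified Lean document; each statement's English description precedes it below -/
import Mathlib

section
/- Let Ω ⊂ ℝⁿ (n ≥ 2) be a bounded, convex, open set and let d_H(x) = inf_{y ∈ ∂Ω} H°(x − y) be the anisotropic distance to the boundary. Then at every point x ∈ Ω where d_H is (Fréchet) differentiable (which is almost every x ∈ Ω, since d_H is Lipschitz), one has H(∇d_H(x)) = 1. -/
open Set MeasureTheory Filter Real
open scoped Pointwise RealInnerProductSpace Topology

noncomputable section

/-- `En n` is the Euclidean space `ℝⁿ`. -/
abbrev En (n : ℕ) := EuclideanSpace ℝ (Fin n)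

/-- The polar function `H°(v) = sup_{ξ ≠ 0} (ξ·v)/H(ξ)`. -/
def polarFn {n : ℕ} (H : En n → ℝ) (v : En n) : ℝ :=
  ⨆ ξ : {ξ : En n // ξ ≠ 0}, ⟪ξ.1, v⟫ / H ξ.1

/-- The Wulff shape `W = {ξ : H°(ξ) < 1}`. -/
def wulff {n : ℕ} (H : En n → ℝ) : Set (En n) := {ξ | polarFn H ξ < 1}

/-- The anisotropic perimeter of `K`, defined as the anisotropic Minkowski content
`P_H(K) = lim_{δ → 0⁺} (|K + δW| - |K|)/δ`. -/
def perimH {n : ℕ} (H : En n → ℝ) (K : Set (En n)) : ℝ :=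
  limUnder (𝓝[>] (0:ℝ))
    (fun δ => ((volume (K + δ • wulff H)).toReal - (volume K).toReal) / δ)

/-- The first Dirichlet eigenvalue of the anisotropic `p`-Laplacian on `Ω`:
`λ_p(Ω) = inf { ∫_Ω H(∇u)^p / ∫_Ω |u|^p : u ∈ C_c^∞(Ω), u ≢ 0 }`. -/
def eigenH {n : ℕ} (H : En n → ℝ) (p : ℝ) (Ω : Set (En n)) : ℝ :=
  sInf {r | ∃ u : En n → ℝ, ContDiff ℝ (⊤ : ℕ∞) u ∧ HasCompactSupport u ∧ tsupport u ⊆ Ω ∧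
    u ≠ 0 ∧ r = (∫ x in Ω, H (gradient u x) ^ p) / ∫ x in Ω, |u x| ^ p}

/-- `σ_p(Ω) = sup { (∫_Ω ψ)^p / ∫_Ω H(∇ψ)^p : ψ ∈ C_c^∞(Ω), ψ ≥ 0, ψ ≢ 0 }`. -/
def sigmaH {n : ℕ} (H : En n → ℝ) (p : ℝ) (Ω : Set (En n)) : ℝ :=
  sSup {r | ∃ ψ : En n → ℝ, ContDiff ℝ (⊤ : ℕ∞) ψ ∧ HasCompactSupport ψ ∧ tsupport ψ ⊆ Ω ∧
    (∀ x, 0 ≤ ψ x) ∧ ψ ≠ 0 ∧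
    r = (∫ x in Ω, ψ x) ^ p / ∫ x in Ω, H (gradient ψ x) ^ p}

/-- The anisotropic `p`-torsional rigidity `τ_p(Ω) = σ_p(Ω)^{1/(p-1)}`. -/
def torsH {n : ℕ} (H : En n → ℝ) (p : ℝ) (Ω : Set (En n)) : ℝ :=
  sigmaH H p Ω ^ (1 / (p - 1))

/-- `π_p = 2 ∫₀^{(p-1)^{1/p}} (1 - t^p/(p-1))^{-1/p} dt`. -/
def pip (p : ℝ) : ℝ :=
  2 * ∫ t in (0:ℝ)..(p - 1) ^ (1/p), (1 - t ^ p / (p - 1)) ^ (-(1/p))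

/-- The anisotropic distance to the boundary `d_H(x) = inf_{y ∈ ∂Ω} H°(x - y)`. -/
def distH {n : ℕ} (H : En n → ℝ) (Ω : Set (En n)) (x : En n) : ℝ :=
  sInf ((fun y => polarFn H (x - y)) '' frontier Ω)

/-- The inner parallel set `Ω_t = {x ∈ Ω : d_H(x) > t}`. -/
def innerSet {n : ℕ} (H : En n → ℝ) (Ω : Set (En n)) (t : ℝ) : Set (En n) :=
  {x ∈ Ω | t < distH H Ω x}

/-- The anisotropic inradius `r_Ω = sup_{x ∈ Ω} d_H(x)`. -/
def inradH {n : ℕ} (H : En n → ℝ) (Ω : Set (En n)) : ℝ :=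
  sSup (distH H Ω '' Ω)

section Aux
variable {n : ℕ} {H : En n → ℝ} {α β : ℝ}

lemma term_le_bound (hα : 0 < α) (hHlow : ∀ ξ, α * ‖ξ‖ ≤ H ξ) (v : En n)
    (ξ : En n) (hξ : ξ ≠ 0) : ⟪ξ, v⟫ / H ξ ≤ ‖v‖ / α := by
  have hξn : 0 < ‖ξ‖ := norm_pos_iff.mpr hξ
  have hHξ : 0 < H ξ := lt_of_lt_of_le (by positivity) (hHlow ξ)
  calc ⟪ξ, v⟫ / H ξ ≤ (‖ξ‖ * ‖v‖) / H ξ :=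
        div_le_div_of_nonneg_right (real_inner_le_norm ξ v) hHξ.le
    _ ≤ (‖ξ‖ * ‖v‖) / (α * ‖ξ‖) :=
        div_le_div_of_nonneg_left (by positivity) (by positivity) (hHlow ξ)
    _ = ‖v‖ / α := by field_simp

lemma polar_bddAbove (hα : 0 < α) (hHlow : ∀ ξ, α * ‖ξ‖ ≤ H ξ) (v : En n) :
    BddAbove (range fun ξ : {ξ : En n // ξ ≠ 0} => ⟪ξ.1, v⟫ / H ξ.1) := by
  refine ⟨‖v‖ / α, ?_⟩
  rintro r ⟨ξ, rfl⟩
  exact term_le_bound hα hHlow v ξ.1 ξ.2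

lemma le_polar (hα : 0 < α) (hHlow : ∀ ξ, α * ‖ξ‖ ≤ H ξ) (v : En n)
    (ξ : En n) (hξ : ξ ≠ 0) : ⟪ξ, v⟫ / H ξ ≤ polarFn H v :=
  le_ciSup (polar_bddAbove hα hHlow v) ⟨ξ, hξ⟩

lemma polar_le [Nonempty {ξ : En n // ξ ≠ 0}] (v : En n) {c : ℝ}
    (h : ∀ ξ : En n, ξ ≠ 0 → ⟪ξ, v⟫ / H ξ ≤ c) : polarFn H v ≤ c :=
  ciSup_le fun ξ => h ξ.1 ξ.2

lemma polar_le_norm (hα : 0 < α) (hHlow : ∀ ξ, α * ‖ξ‖ ≤ H ξ)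
    [Nonempty {ξ : En n // ξ ≠ 0}] (v : En n) : polarFn H v ≤ ‖v‖ / α :=
  polar_le v fun ξ hξ => term_le_bound hα hHlow v ξ hξ

lemma polar_pos (hα : 0 < α) (hβ : 0 < β) (hHlow : ∀ ξ, α * ‖ξ‖ ≤ H ξ)
    (hHup : ∀ ξ, H ξ ≤ β * ‖ξ‖) (v : En n) (hv : v ≠ 0) : 0 < polarFn H v := by
  have hvn : 0 < ‖v‖ := norm_pos_iff.mpr hv
  have hHv : 0 < H v := lt_of_lt_of_le (by positivity) (hHlow v)
  have h1 : 0 < ⟪v, v⟫ / H v := by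
    rw [real_inner_self_eq_norm_sq]
    positivity
  exact lt_of_lt_of_le h1 (le_polar hα hHlow v v hv)

lemma polar_nonneg (hα : 0 < α) (hHlow : ∀ ξ, α * ‖ξ‖ ≤ H ξ)
    (hHhom : ∀ (t : ℝ) (ξ : En n), H (t • ξ) = |t| * H ξ)
    [ne : Nonempty {ξ : En n // ξ ≠ 0}] (v : En n) : 0 ≤ polarFn H v := by
  obtain ⟨ξ, hξ⟩ := ne
  have hξn : 0 < ‖ξ‖ := norm_pos_iff.mpr hξ
  have hHξ : 0 < H ξ := lt_of_lt_of_le (by positivity) (hHlow ξ)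
  rcases le_or_gt 0 ⟪ξ, v⟫ with h | h
  · exact le_trans (by positivity) (le_polar hα hHlow v ξ hξ)
  · have hξ' : (-ξ : En n) ≠ 0 := neg_ne_zero.mpr hξ
    have hHn : H (-ξ) = H ξ := by
      have := hHhom (-1) ξ
      simpa using this
    have : (0:ℝ) ≤ ⟪-ξ, v⟫ / H (-ξ) := by
      rw [inner_neg_left, hHn]
      exact div_nonneg (by linarith) hHξ.le
    exact le_trans this (le_polar hα hHlow v (-ξ) hξ')

lemma polar_add (hα : 0 < α) (hHlow : ∀ ξ, α * ‖ξ‖ ≤ H ξ)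
    [Nonempty {ξ : En n // ξ ≠ 0}] (a b : En n) :
    polarFn H (a + b) ≤ polarFn H a + polarFn H b := by
  refine polar_le _ fun ξ hξ => ?_
  rw [inner_add_right, add_div]
  exact add_le_add (le_polar hα hHlow a ξ hξ) (le_polar hα hHlow b ξ hξ)

lemma polar_smul (hα : 0 < α) (hHlow : ∀ ξ, α * ‖ξ‖ ≤ H ξ)
    {t : ℝ} (ht : 0 ≤ t) (v : En n) : polarFn H (t • v) = t * polarFn H v := by
  unfold polarFn
  rw [Real.mul_iSup_of_nonneg ht]
  congr 1
  ext ξ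
  rw [inner_smul_right, mul_div_assoc]

end Aux
section SlopeAux
open Filter Topology

private lemma slope_tendsto_right {φ : ℝ → ℝ} {a : ℝ} (h : HasDerivAt φ a 0) :
    Tendsto (fun t => (φ t - φ 0) / t) (𝓝[>] (0:ℝ)) (𝓝 a) := by
  have h2 := (hasDerivAt_iff_tendsto_slope.mp h).mono_left
    (nhdsWithin_mono 0 (fun t ht => ne_of_gt ht))
  refine h2.congr fun t => ?_
  simp [slope_def_field]

private lemma slope_deriv_le {φ : ℝ → ℝ} {a c : ℝ} (h : HasDerivAt φ a 0)
    (hb : ∀ᶠ t in 𝓝[>] (0:ℝ), (φ t - φ 0) / t ≤ c) : a ≤ c :=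
  le_of_tendsto (slope_tendsto_right h) hb

private lemma slope_deriv_eq {φ : ℝ → ℝ} {a c : ℝ} (h : HasDerivAt φ a 0)
    (hb : ∀ᶠ t in 𝓝[>] (0:ℝ), (φ t - φ 0) / t = c) : a = c :=
  tendsto_nhds_unique (slope_tendsto_right h)
    (Tendsto.congr' (hb.mono fun _ ht => ht.symm) tendsto_const_nhds)

end SlopeAux

/-- **Eikonal equation for the anisotropic distance**: at every point `x ∈ Ω` where the
anisotropic distance `d_H` is differentiable (almost every point, since `d_H` is
Lipschitz), one has `H(∇d_H(x)) = 1`. -/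
theorem anisotropic_distance_eikonal
    (n : ℕ) (hn : 2 ≤ n)
    (H : En n → ℝ)
    (hH0 : ∀ ξ, 0 ≤ H ξ)
    (hHconv : ConvexOn ℝ univ H)
    (hHC1 : ContDiffOn ℝ 1 H {(0 : En n)}ᶜ)
    (hHhom : ∀ (t : ℝ) (ξ : En n), H (t • ξ) = |t| * H ξ)
    (α β : ℝ) (hα : 0 < α) (hαβ : α ≤ β)
    (hHlow : ∀ ξ, α * ‖ξ‖ ≤ H ξ) (hHup : ∀ ξ, H ξ ≤ β * ‖ξ‖)
    (Ω : Set (En n)) (hΩo : IsOpen Ω) (hΩb : Bornology.IsBounded Ω)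
    (hΩc : Convex ℝ Ω)
    (x : En n) (hx : x ∈ Ω) (g : En n) (hg : HasGradientAt (distH H Ω) g x) :
    H g = 1 := by
  haveI hnt : Nontrivial (En n) := by
    refine ⟨EuclideanSpace.single ⟨0, by omega⟩ 1, 0, ?_⟩
    intro h
    have := congrArg (fun f : En n => f ⟨0, by omega⟩) h
    simp [EuclideanSpace.single] at this
  haveI hne : Nonempty {ξ : En n // ξ ≠ 0} := by
    obtain ⟨ξ, hξ⟩ := exists_ne (0 : En n); exact ⟨⟨ξ, hξ⟩⟩
  have hβ : 0 < β := lt_of_lt_of_le hα hαβ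
  set d := distH H Ω with hd
  -- frontier nonempty and compact
  have hfr_ne : (frontier Ω).Nonempty := by
    rw [nonempty_iff_ne_empty]
    intro h
    rcases frontier_eq_empty_iff.mp h with h1 | h1
    · exact absurd (h1 ▸ hx) (notMem_empty x)
    · exact NormedSpace.unbounded_univ ℝ (En n) (h1 ▸ hΩb)
  have hfr_cpt : IsCompact (frontier Ω) :=
    (Metric.isCompact_of_isClosed_isBounded isClosed_closure hΩb.closure).of_isClosed_subset
      isClosed_frontier frontier_subset_closure
  -- basic distance estimates
  have himg_ne : ∀ z : En n, ((fun y => polarFn H (z - y)) '' frontier Ω).Nonempty :=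
    fun z => hfr_ne.image _
  have himg_bdd : ∀ z : En n, BddBelow ((fun y => polarFn H (z - y)) '' frontier Ω) := by
    intro z
    refine ⟨0, ?_⟩
    rintro r ⟨y, hy, rfl⟩
    exact polar_nonneg hα hHlow hHhom _
  have hd_le : ∀ z y : En n, y ∈ frontier Ω → d z ≤ polarFn H (z - y) :=
    fun z y hy => csInf_le (himg_bdd z) ⟨y, hy, rfl⟩
  have hd_lip : ∀ z z' : En n, d z' ≤ polarFn H (z' - z) + d z := by
    intro z z'
    have h3 : ∀ y ∈ frontier Ω, d z' - polarFn H (z' - z) ≤ polarFn H (z - y) := by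
      intro y hy
      have h1 : d z' ≤ polarFn H (z' - y) := hd_le z' y hy
      have h2 : polarFn H (z' - y) ≤ polarFn H (z' - z) + polarFn H (z - y) := by
        have := polar_add hα hHlow (z' - z) (z - y)
        rwa [sub_add_sub_cancel] at this
      linarith
    have h4 : d z' - polarFn H (z' - z) ≤ d z := by
      refine le_csInf (himg_ne z) ?_
      rintro r ⟨y, hy, rfl⟩
      exact h3 y hy
    linarith
  -- minimizing boundary point
  have hcont : ContinuousOn (fun y => polarFn H (x - y)) (frontier Ω) := by
    have hlip : LipschitzWith (⟨1/α, by positivity⟩ : NNReal) (fun y : En n => polarFn H (x - y)) := by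
      refine LipschitzWith.of_dist_le_mul fun y1 y2 => ?_
      rw [Real.dist_eq, dist_eq_norm]
      have key : ∀ a b : En n, polarFn H (x - a) - polarFn H (x - b) ≤ (1/α) * ‖a - b‖ := by
        intro a b
        have h1 : polarFn H (x - a) ≤ polarFn H (b - a) + polarFn H (x - b) := by
          have := polar_add hα hHlow (b - a) (x - b)
          rw [show b - a + (x - b) = x - a by abel] at this
          exact this
        have h2 : polarFn H (b - a) ≤ ‖b - a‖ / α := polar_le_norm hα hHlow _
        rw [show ‖a - b‖ = ‖b - a‖ from norm_sub_rev a b]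
        have : ‖b - a‖ / α = (1/α) * ‖b - a‖ := by ring
        linarith
      have := key y1 y2
      have h2 := key y2 y1
      rw [show ‖y2 - y1‖ = ‖y1 - y2‖ from norm_sub_rev y2 y1] at h2
      rw [abs_sub_le_iff]
      constructor
      · exact this
      · exact h2
    exact hlip.continuous.continuousOn
  obtain ⟨y, hyfr, hymin⟩ := hfr_cpt.exists_isMinOn hfr_ne hcont
  have hdx : d x = polarFn H (x - y) := by
    refine le_antisymm (hd_le x y hyfr) ?_
    refine le_csInf (himg_ne x) ?_
    rintro r ⟨y', hy', rfl⟩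
    exact hymin hy'
  have hynΩ : y ∉ Ω := by
    rw [hΩo.frontier_eq] at hyfr
    exact hyfr.2
  have hw : x - y ≠ 0 := sub_ne_zero.mpr (fun h => hynΩ (h ▸ hx))
  have hdxpos : 0 < d x := hdx ▸ polar_pos hα hβ hHlow hHup _ hw
  -- directional derivatives of d
  have hder : ∀ u : En n, HasDerivAt (fun t : ℝ => d (x + t • u)) ⟪g, u⟫ 0 := by
    intro u
    have hline : HasDerivAt (fun t : ℝ => x + t • u) u 0 := by
      simpa using ((hasDerivAt_id (0:ℝ)).smul_const u).const_add x
    have hgr : HasFDerivAt d (InnerProductSpace.toDual ℝ (En n) g) (x + (0:ℝ) • u) := by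
      simpa using hg.hasFDerivAt
    have := hgr.comp_hasDerivAt 0 hline
    exact this
  -- (a) upper bound on directional derivatives
  have hineq : ∀ u : En n, ⟪g, u⟫ ≤ polarFn H u := by
    intro u
    refine slope_deriv_le (hder u) ?_
    filter_upwards [self_mem_nhdsWithin] with t ht
    have ht : (0:ℝ) < t := ht
    have h1 : d (x + t • u) ≤ polarFn H ((x + t • u) - x) + d x := hd_lip x _
    have h2 : (x + t • u) - x = t • u := by abel
    rw [h2, polar_smul hα hHlow ht.le] at h1
    have h0 : x + (0:ℝ) • u = x := by simp
    rw [h0, div_le_iff₀ ht, mul_comm]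
    linarith
  -- (b) exact derivative toward nearest boundary point
  have hseg : ∀ t : ℝ, 0 ≤ t → t ≤ 1 → d (x + t • (y - x)) = (1 - t) * d x := by
    intro t ht0 ht1
    set z := x + t • (y - x) with hz
    have hzy : z - y = (1 - t) • (x - y) := by rw [hz]; module
    have hxz : x - z = t • (x - y) := by rw [hz]; module
    have hub : d z ≤ (1 - t) * d x := by
      have h1 := hd_le z y hyfr
      rw [hzy, polar_smul hα hHlow (by linarith)] at h1
      rw [hdx]
      exact h1
    have hlb : (1 - t) * d x ≤ d z := by
      have h1 : d x ≤ polarFn H (x - z) + d z := hd_lip z x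
      rw [hxz, polar_smul hα hHlow ht0, ← hdx] at h1
      nlinarith
    linarith
  have hgw : ⟪g, y - x⟫ = -(d x) := by
    refine slope_deriv_eq (hder (y - x)) ?_
    filter_upwards [Ioo_mem_nhdsGT_of_mem (show (0:ℝ) ∈ Ico 0 1 by norm_num)] with t ht
    rw [hseg t ht.1.le ht.2.le]
    have h0 : x + (0:ℝ) • (y - x) = x := by simp
    rw [h0, div_eq_iff (ne_of_gt ht.1)]
    ring
  have hgw' : ⟪g, x - y⟫ = d x := by
    have h1 : ⟪g, x - y⟫ = -⟪g, y - x⟫ := by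
      rw [← inner_neg_right, neg_sub]
    rw [h1, hgw, neg_neg]
  have hg0 : g ≠ 0 := by
    intro h
    rw [h, inner_zero_left] at hgw'
    exact absurd hgw'.symm (ne_of_gt hdxpos)
  have hgn : 0 < ‖g‖ := norm_pos_iff.mpr hg0
  have hHg : 0 < H g := lt_of_lt_of_le (by positivity) (hHlow g)
  -- H g ≥ 1
  have hge : 1 ≤ H g := by
    have h1 : ⟪g, x - y⟫ / H g ≤ polarFn H (x - y) := le_polar hα hHlow _ g hg0
    rw [hgw', ← hdx, div_le_iff₀ hHg] at h1
    nlinarith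
  -- gradient of H at g
  have hdiff : DifferentiableAt ℝ H g := by
    refine (hHC1.differentiableOn one_ne_zero).differentiableAt
      (IsOpen.mem_nhds isOpen_compl_singleton ?_)
    simpa using hg0
  set v := (InnerProductSpace.toDual ℝ (En n)).symm (fderiv ℝ H g) with hv
  have hgradH : HasGradientAt H v g := by
    rw [hasGradientAt_iff_hasFDerivAt, hv, LinearIsometryEquiv.apply_symm_apply]
    exact hdiff.hasFDerivAt
  have hderH : ∀ u : En n, HasDerivAt (fun t : ℝ => H (g + t • u)) ⟪v, u⟫ 0 := by
    intro u
    have hline : HasDerivAt (fun t : ℝ => g + t • u) u 0 := by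
      simpa using ((hasDerivAt_id (0:ℝ)).smul_const u).const_add g
    have hgr : HasFDerivAt H (InnerProductSpace.toDual ℝ (En n) v) (g + (0:ℝ) • u) := by
      simpa using hgradH.hasFDerivAt
    have := hgr.comp_hasDerivAt 0 hline
    exact this
  -- Euler's identity
  have heuler : ⟪v, g⟫ = H g := by
    refine slope_deriv_eq (hderH g) ?_
    filter_upwards [Ioo_mem_nhdsGT_of_mem (show (0:ℝ) ∈ Ico 0 1 by norm_num)] with t ht
    have h1 : g + t • g = (1 + t) • g := by module
    have h0 : g + (0:ℝ) • g = g := by simp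
    rw [h1, h0, hHhom, abs_of_pos (by linarith [ht.1] : (0:ℝ) < 1 + t),
      div_eq_iff (ne_of_gt ht.1)]
    ring
  -- convexity: supporting hyperplane
  have hsupp : ∀ ξ : En n, ⟪ξ, v⟫ ≤ H ξ := by
    intro ξ
    have key : ⟪v, ξ - g⟫ ≤ H ξ - H g := by
      refine slope_deriv_le (hderH (ξ - g)) ?_
      filter_upwards [Ioo_mem_nhdsGT_of_mem (show (0:ℝ) ∈ Ico 0 1 by norm_num)] with t ht
      have hcomb : g + t • (ξ - g) = (1 - t) • g + t • ξ := by module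
      have h2 := hHconv.2 (mem_univ g) (mem_univ ξ)
        (by linarith [ht.2] : (0:ℝ) ≤ 1 - t) ht.1.le (by ring)
      have h0 : g + (0:ℝ) • (ξ - g) = g := by simp
      simp only [smul_eq_mul] at h2
      rw [hcomb, h0, div_le_iff₀ ht.1]
      nlinarith
    rw [inner_sub_right, heuler] at key
    rw [real_inner_comm]
    linarith
  have hpv : polarFn H v ≤ 1 := by
    refine polar_le _ fun ξ hξ => ?_
    have hξn : 0 < ‖ξ‖ := norm_pos_iff.mpr hξ
    have hHξ : 0 < H ξ := lt_of_lt_of_le (by positivity) (hHlow ξ)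
    rw [div_le_one hHξ]
    exact hsupp ξ
  have hle : H g ≤ 1 := by
    have h1 : ⟪g, v⟫ ≤ polarFn H v := hineq v
    rw [real_inner_comm] at h1
    rw [← heuler]
    linarith
  linarith
end
end

section
/- One-dimensional Poincaré inequality with mixed boundary behavior: let 1 < p < ∞ and let f : ℝ → ℝ be C¹ on [0, π_p/2] with f(π_p/2) = 0. Then ∫₀^{π_p/2} |f'(t)|^p dt ≥ ∫₀^{π_p/2} |f(t)|^p dt. (That is, the first eigenvalue of −(|u'|^{p−2}u')' = λ|u|^{p−2}u on [0, π_p/2] with u'(0)=0, u(π_p/2)=0 equals 1.) -/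
open Set MeasureTheory Filter Real
open scoped Pointwise RealInnerProductSpace Topology

noncomputable section

set_option linter.unusedSectionVars false

namespace OneDP

open Function

variable (p : ℝ)

/-- The integrand of the separable Riccati ODE `w' = 1 + (p-1) w^{p/(p-1)}`. -/
def gg (x : ℝ) : ℝ := (1 + (p - 1) * |x| ^ (p / (p - 1)))⁻¹

/-- Primitive of `gg`. -/
def GG (x : ℝ) : ℝ := ∫ t in (0:ℝ)..x, gg p t

/-- Total mass of `gg` on `(0, ∞)`; this will be shown to equal `π_p / 2`. -/
def LL : ℝ := ∫ x in Ioi (0:ℝ), gg p x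

/-- The inverse function of `GG`, a solution of `w' = 1 + (p-1) w^{p/(p-1)}`, `w 0 = 0`. -/
def ww (t : ℝ) : ℝ := invFunOn (GG p) (Ici 0) t

variable {p}

section basic

variable (hp : 1 < p)
include hp

lemma hp0 : 0 < p := lt_trans one_pos hp
lemma hp1 : 0 < p - 1 := sub_pos.2 hp
lemma hq1 : 1 < p / (p - 1) := (one_lt_div (hp1 hp)).2 (by linarith)
lemma hq0 : 0 < p / (p - 1) := lt_trans one_pos (hq1 hp)

lemma conj : Real.HolderConjugate p (p / (p - 1)) :=
  (Real.holderConjugate_iff_eq_conjExponent hp).2 rfl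

lemma denom_pos (x : ℝ) : 0 < 1 + (p - 1) * |x| ^ (p / (p - 1)) := by
  have h1 : 0 ≤ |x| ^ (p / (p - 1)) := Real.rpow_nonneg (abs_nonneg x) _
  nlinarith [hp1 hp]

lemma gg_pos (x : ℝ) : 0 < gg p x := inv_pos.2 (denom_pos hp x)

lemma gg_nonneg (x : ℝ) : 0 ≤ gg p x := (gg_pos hp x).le

lemma gg_cont : Continuous (gg p) := by
  refine (continuous_const.add (continuous_const.mul
    (continuous_abs.rpow_const fun x => Or.inr (hq0 hp).le))).inv₀ ?_
  exact fun x => (denom_pos hp x).ne'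

lemma gg_le_rpow {x : ℝ} (hx : 0 < x) :
    gg p x ≤ (p - 1)⁻¹ * x ^ (-(p / (p - 1))) := by
  have hxq : 0 < x ^ (p / (p - 1)) := Real.rpow_pos_of_pos hx _
  have h1 : ((p - 1) * x ^ (p / (p - 1)))⁻¹ = (p - 1)⁻¹ * x ^ (-(p / (p - 1))) := by
    rw [mul_inv, Real.rpow_neg hx.le]
  rw [gg, abs_of_nonneg hx.le, ← h1]
  apply inv_anti₀ (mul_pos (hp1 hp) hxq)
  nlinarith

lemma gg_int : IntegrableOn (gg p) (Ioi 0) := by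
  have h1 : IntegrableOn (gg p) (Ioc 0 1) := (gg_cont hp).integrableOn_Ioc
  have h2 : IntegrableOn (gg p) (Ioi 1) := by
    have hq : -(p / (p - 1)) < -1 := by linarith [hq1 hp]
    have hint : IntegrableOn (fun x : ℝ => (p - 1)⁻¹ * x ^ (-(p / (p - 1)))) (Ioi 1) :=
      (integrableOn_Ioi_rpow_of_lt hq one_pos).const_mul _
    refine hint.mono' ((gg_cont hp).aestronglyMeasurable.restrict) ?_
    filter_upwards [ae_restrict_mem measurableSet_Ioi] with x hx
    have hx0 : (0:ℝ) < x := lt_trans one_pos hx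
    rw [Real.norm_eq_abs, abs_of_nonneg (gg_nonneg hp x)]
    exact gg_le_rpow hp hx0
  have := h1.union h2
  rwa [Ioc_union_Ioi_eq_Ioi zero_le_one] at this

lemma GG_deriv (x : ℝ) : HasDerivAt (GG p) (gg p x) x :=
  intervalIntegral.integral_hasDerivAt_right ((gg_cont hp).intervalIntegrable _ _)
    ((gg_cont hp).stronglyMeasurable.stronglyMeasurableAtFilter)
    (gg_cont hp).continuousAt

lemma GG_cont : Continuous (GG p) :=
  continuous_iff_continuousAt.2 fun x => (GG_deriv hp x).continuousAt

lemma GG_mono : StrictMono (GG p) :=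
  strictMono_of_deriv_pos fun x => by
    rw [(GG_deriv hp x).deriv]; exact gg_pos hp x

lemma GG_zero : GG p 0 = 0 := intervalIntegral.integral_same

lemma GG_add_tail {x : ℝ} (hx : 0 ≤ x) :
    GG p x + ∫ t in Ioi x, gg p t = LL p := by
  rw [GG, intervalIntegral.integral_of_le hx, LL, ← Ioc_union_Ioi_eq_Ioi hx,
    setIntegral_union (Ioc_disjoint_Ioi le_rfl) measurableSet_Ioi
      ((gg_cont hp).integrableOn_Ioc) ((gg_int hp).mono_set (Ioi_subset_Ioi hx))]

lemma tail_nonneg (x : ℝ) : 0 ≤ ∫ t in Ioi x, gg p t :=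
  setIntegral_nonneg measurableSet_Ioi fun y _ => gg_nonneg hp y

lemma GG_lt_LL {x : ℝ} (hx : 0 ≤ x) : GG p x < LL p := by
  have h1 : GG p x < GG p (x + 1) := GG_mono hp (lt_add_one x)
  have h2 := GG_add_tail hp (by linarith : (0:ℝ) ≤ x + 1)
  have h3 := tail_nonneg hp (x + 1)
  linarith

lemma LL_pos : 0 < LL p := by
  have := GG_lt_LL hp le_rfl
  rwa [GG_zero hp] at this

lemma tail_bound {x : ℝ} (hx : 0 < x) :
    LL p - GG p x ≤ x ^ (-(p - 1)⁻¹) := by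
  have h0 := GG_add_tail hp hx.le
  have h1 : ∫ t in Ioi x, gg p t ≤ ∫ t in Ioi x, (p - 1)⁻¹ * t ^ (-(p / (p - 1))) := by
    refine setIntegral_mono_on ((gg_int hp).mono_set (Ioi_subset_Ioi hx.le))
      ((integrableOn_Ioi_rpow_of_lt (by linarith [hq1 hp]) hx).const_mul _)
      measurableSet_Ioi ?_
    exact fun t ht => gg_le_rpow hp (lt_trans hx ht)
  have h2 : ∫ t in Ioi x, (p - 1)⁻¹ * t ^ (-(p / (p - 1)))
      = (p - 1)⁻¹ * ∫ t in Ioi x, t ^ (-(p / (p - 1))) := by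
    exact integral_const_mul _ _
  have h3 : ∫ t in Ioi x, t ^ (-(p / (p - 1)))
      = -x ^ (-(p / (p - 1)) + 1) / (-(p / (p - 1)) + 1) :=
    integral_Ioi_rpow_of_lt (by linarith [hq1 hp]) hx
  have he : -(p / (p - 1)) + 1 = -(p - 1)⁻¹ := by
    have h := (hp1 hp).ne'
    field_simp
    ring
  have hp1' := hp1 hp
  rw [h2, h3, he] at h1
  have : (p - 1)⁻¹ * (-x ^ (-(p - 1)⁻¹) / -(p - 1)⁻¹) = x ^ (-(p - 1)⁻¹) := by
    field_simp
  rw [this] at h1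
  linarith

lemma exists_inv {t : ℝ} (ht : t ∈ Ico 0 (LL p)) : ∃ x ∈ Ici (0:ℝ), GG p x = t := by
  obtain ⟨ht0, htL⟩ := ht
  have htd : 0 < LL p - t := by linarith
  have htend : Tendsto (fun x : ℝ => x ^ (-(p - 1)⁻¹)) atTop (𝓝 0) :=
    tendsto_rpow_neg_atTop (inv_pos.2 (hp1 hp))
  have hev : ∀ᶠ x : ℝ in atTop, x ^ (-(p - 1)⁻¹) < LL p - t :=
    htend.eventually_lt_const htd
  obtain ⟨X, hX1, hX2⟩ := (hev.and (eventually_gt_atTop 0)).exists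
  have hGX : t < GG p X := by
    have := tail_bound hp hX2
    linarith
  have hmem : t ∈ Icc (GG p 0) (GG p X) := by
    rw [GG_zero hp]; exact ⟨ht0, hGX.le⟩
  obtain ⟨x, hx, hGx⟩ := intermediate_value_Icc hX2.le ((GG_cont hp).continuousOn) hmem
  exact ⟨x, hx.1, hGx⟩

lemma ww_spec {t : ℝ} (ht : t ∈ Ico 0 (LL p)) : GG p (ww p t) = t :=
  invFunOn_eq (exists_inv hp ht)

lemma ww_nonneg {t : ℝ} (ht : t ∈ Ico 0 (LL p)) : 0 ≤ ww p t :=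
  invFunOn_mem (exists_inv hp ht)

lemma ww_GG {x : ℝ} (hx : 0 ≤ x) : ww p (GG p x) = x :=
  ((GG_mono hp).injective.injOn).leftInvOn_invFunOn hx

lemma ww_zero : ww p 0 = 0 := by
  have := ww_GG hp le_rfl
  rwa [GG_zero hp] at this

lemma ww_mono : StrictMonoOn (ww p) (Ico 0 (LL p)) := by
  intro t1 h1 t2 h2 h12
  have e1 := ww_spec hp h1
  have e2 := ww_spec hp h2
  exact (GG_mono hp).lt_iff_lt.1 (by rw [e1, e2]; exact h12)

lemma ww_pos {t : ℝ} (ht : t ∈ Ioo 0 (LL p)) : 0 < ww p t := by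
  have h := ww_mono hp (left_mem_Ico.2 (LL_pos hp)) ⟨ht.1.le, ht.2⟩ ht.1
  rwa [ww_zero hp] at h

lemma ww_image_Ioo : ww p '' Ioo 0 (LL p) = Ioi 0 := by
  apply Subset.antisymm
  · rintro y ⟨t, ht, rfl⟩
    exact ww_pos hp ht
  · intro x hx
    have hGx : GG p x ∈ Ioo 0 (LL p) := by
      constructor
      · have := GG_mono hp (show (0:ℝ) < x from hx)
        rwa [GG_zero hp] at this
      · exact GG_lt_LL hp (le_of_lt hx)
    exact ⟨GG p x, hGx, ww_GG hp (le_of_lt hx)⟩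

lemma ww_cont0 : ContinuousWithinAt (ww p) (Ici 0) 0 := by
  refine (ww_mono hp).continuousWithinAt_right_of_surjOn
    (Ico_mem_nhdsGE (LL_pos hp)) ?_
  rw [ww_zero hp]
  intro y hy
  rw [← ww_image_Ioo hp] at hy
  exact (image_mono Ioo_subset_Ico_self) hy

lemma ww_contAt {a : ℝ} (ha : a ∈ Ioo 0 (LL p)) : ContinuousAt (ww p) a := by
  refine StrictMonoOn.continuousAt_of_image_mem_nhds
    ((ww_mono hp).mono Ioo_subset_Ico_self) (isOpen_Ioo.mem_nhds ha) ?_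
  rw [ww_image_Ioo hp]
  exact Ioi_mem_nhds (ww_pos hp ha)

lemma ww_deriv {a : ℝ} (ha : a ∈ Ioo 0 (LL p)) :
    HasDerivAt (ww p) (1 + (p - 1) * ww p a ^ (p / (p - 1))) a := by
  have h0 : HasDerivAt (ww p) (gg p (ww p a))⁻¹ a := by
    refine HasDerivAt.of_local_left_inverse (ww_contAt hp ha)
      (GG_deriv hp (ww p a)) (gg_pos hp _).ne' ?_
    filter_upwards [isOpen_Ioo.mem_nhds ha] with y hy
    exact ww_spec hp (Ioo_subset_Ico_self hy)
  have : (gg p (ww p a))⁻¹ = 1 + (p - 1) * ww p a ^ (p / (p - 1)) := by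
    rw [gg, inv_inv, abs_of_nonneg (ww_nonneg hp (Ioo_subset_Ico_self ha))]
  rwa [this] at h0

lemma ww_bound {t : ℝ} (ht : t ∈ Ioo 0 (LL p)) :
    ww p t ≤ (LL p - t) ^ (-(p - 1)) := by
  set a := ww p t with ha_def
  have ha : 0 < a := ww_pos hp ht
  have h1 : LL p - t ≤ a ^ (-(p - 1)⁻¹) := by
    have := tail_bound hp ha
    rwa [ww_spec hp (Ioo_subset_Ico_self ht)] at this
  have h2 : a = (a ^ (-(p - 1)⁻¹)) ^ (-(p - 1)) := by
    rw [← Real.rpow_mul ha.le]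
    rw [show -(p - 1)⁻¹ * -(p - 1) = 1 by rw [neg_mul_neg, inv_mul_cancel₀ (hp1 hp).ne']]
    exact (Real.rpow_one a).symm
  rw [h2]
  exact Real.rpow_le_rpow_of_nonpos (by linarith [ht.2]) h1
    (by linarith [hp1 hp])

end basic


section pipid

variable (p : ℝ)

/-- Auxiliary function for the change of variables in the identity `π_p/2 = L`. -/
def hh (u : ℝ) : ℝ := (u ^ (-p) - 1) / (p - 1)

def phi (u : ℝ) : ℝ := hh p u ^ ((p - 1) / p)

def phid (u : ℝ) : ℝ :=
  -p * u ^ (-p - 1) / (p - 1) * ((p - 1) / p) * hh p u ^ ((p - 1) / p - 1)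

variable {p} (hp : 1 < p)
include hp

lemma hh_pos {u : ℝ} (hu : u ∈ Ioo (0:ℝ) 1) : 0 < hh p u := by
  have h1 : 1 < u ^ (-p) := by
    rw [Real.one_lt_rpow_iff_of_pos hu.1]
    exact Or.inr ⟨hu.2, by linarith⟩
  exact div_pos (by linarith) (hp1 hp)

lemma phi_pos {u : ℝ} (hu : u ∈ Ioo (0:ℝ) 1) : 0 < phi p u :=
  Real.rpow_pos_of_pos (hh_pos hp hu) _

lemma phi_hasDeriv {u : ℝ} (hu : u ∈ Ioo (0:ℝ) 1) :
    HasDerivAt (phi p) (phid p u) u := by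
  have h1 : HasDerivAt (fun y : ℝ => y ^ (-p)) (-p * u ^ (-p - 1)) u :=
    Real.hasDerivAt_rpow_const (Or.inl hu.1.ne')
  have h2 : HasDerivAt (hh p) (-p * u ^ (-p - 1) / (p - 1)) u := (h1.sub_const 1).div_const _
  exact h2.rpow_const (Or.inl (hh_pos hp hu).ne')

lemma gg_phi {u : ℝ} (hu : u ∈ Ioo (0:ℝ) 1) : gg p (phi p u) = u ^ p := by
  have h1 : phi p u ^ (p / (p - 1)) = hh p u := by
    rw [phi, ← Real.rpow_mul (hh_pos hp hu).le,
      show (p - 1) / p * (p / (p - 1)) = 1 by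
        rw [div_mul_div_comm, mul_comm p (p - 1)]
        exact div_self (mul_ne_zero (hp1 hp).ne' (hp0 hp).ne'), Real.rpow_one]
  have h2 : 1 + (p - 1) * hh p u = u ^ (-p) := by
    rw [hh, mul_div_cancel₀ _ (hp1 hp).ne']
    ring
  rw [gg, abs_of_pos (phi_pos hp hu), h1, h2, Real.rpow_neg hu.1.le, inv_inv]

lemma phi_inj : InjOn (phi p) (Ioo (0:ℝ) 1) := by
  intro u1 h1 u2 h2 heq
  have e : u1 ^ p = u2 ^ p := by
    rw [← gg_phi hp h1, ← gg_phi hp h2, heq]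
  rcases lt_trichotomy u1 u2 with h | h | h
  · exact absurd e (ne_of_lt (Real.rpow_lt_rpow h1.1.le h (hp0 hp)))
  · exact h
  · exact absurd e.symm (ne_of_lt (Real.rpow_lt_rpow h2.1.le h (hp0 hp)))

lemma phi_image : phi p '' Ioo (0:ℝ) 1 = Ioi 0 := by
  apply Subset.antisymm
  · rintro y ⟨u, hu, rfl⟩
    exact phi_pos hp hu
  · intro y hy
    have hy0 : (0:ℝ) < y := hy
    set D : ℝ := 1 + (p - 1) * y ^ (p / (p - 1)) with hD_def
    have hD : 1 < D := by
      have : 0 < (p - 1) * y ^ (p / (p - 1)) :=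
        mul_pos (hp1 hp) (Real.rpow_pos_of_pos hy0 _)
      simp only [hD_def]; linarith
    have hD0 : (0:ℝ) < D := by linarith
    set u : ℝ := D ^ (-(1 / p)) with hu_def
    have hu0 : 0 < u := Real.rpow_pos_of_pos hD0 _
    have hu1 : u < 1 := Real.rpow_lt_one_of_one_lt_of_neg hD (by
      have := hp0 hp; linarith [one_div_pos.2 (hp0 hp)])
    have hup : u ^ (-p) = D := by
      rw [hu_def, ← Real.rpow_mul hD0.le,
        show -(1 / p) * -p = 1 by field_simp, Real.rpow_one]
    have hhu : hh p u = y ^ (p / (p - 1)) := by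
      rw [hh, hup, hD_def, add_sub_cancel_left, mul_div_cancel_left₀ _ (hp1 hp).ne']
    refine ⟨u, ⟨hu0, hu1⟩, ?_⟩
    rw [phi, hhu, ← Real.rpow_mul hy0.le,
      show p / (p - 1) * ((p - 1) / p) = 1 by
        rw [div_mul_div_comm, mul_comm p (p - 1)]
        exact div_self (mul_ne_zero (hp1 hp).ne' (hp0 hp).ne'), Real.rpow_one]

lemma integrand_eq {u : ℝ} (hu : u ∈ Ioo (0:ℝ) 1) :
    |phid p u| * gg p (phi p u) = (p - 1) ^ (1 / p) * (1 - u ^ p) ^ (-(1 / p)) := by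
  have hp1' := hp1 hp
  have hp0' := hp0 hp
  have hu0 := hu.1
  have hupp : 0 < u ^ p := Real.rpow_pos_of_pos hu0 p
  have hA : 0 < 1 - u ^ p := by
    have : u ^ p < 1 := Real.rpow_lt_one hu0.le hu.2 hp0'
    linarith
  -- rewrite phid
  have he : (p - 1) / p - 1 = -(1 / p) := by field_simp; ring
  have h1 : phid p u = -(hh p u ^ (-(1 / p)) * u ^ (-p - 1)) := by
    rw [phid, he]
    field_simp
  have hhh := hh_pos hp hu
  have habs : |phid p u| = hh p u ^ (-(1 / p)) * u ^ (-p - 1) := by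
    rw [h1, abs_neg, abs_of_pos (mul_pos (Real.rpow_pos_of_pos hhh _)
      (Real.rpow_pos_of_pos hu0 _))]
  -- hh in terms of u^p
  have hhalt : hh p u = (1 - u ^ p) / ((p - 1) * u ^ p) := by
    rw [hh, Real.rpow_neg hu0.le]
    field_simp
  have hB : (0:ℝ) < (p - 1) * u ^ p := mul_pos hp1' hupp
  have h2 : hh p u ^ (-(1 / p)) =
      (p - 1) ^ (1 / p) * u * (1 - u ^ p) ^ (-(1 / p)) := by
    rw [hhalt, Real.div_rpow hA.le hB.le, div_eq_mul_inv, ← Real.rpow_neg hB.le, neg_neg,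
      Real.mul_rpow hp1'.le hupp.le, ← Real.rpow_mul hu0.le,
      show p * (1 / p) = 1 by field_simp, Real.rpow_one]
    ring
  rw [habs, gg_phi hp hu, h2]
  have h3 : u ^ (-p - 1) * u ^ p = u ^ (-1 : ℝ) := by
    rw [← Real.rpow_add hu0, show -p - 1 + p = (-1:ℝ) by ring]
  calc (p - 1) ^ (1 / p) * u * (1 - u ^ p) ^ (-(1 / p)) * u ^ (-p - 1) * u ^ p
      = (p - 1) ^ (1 / p) * (1 - u ^ p) ^ (-(1 / p)) * (u * (u ^ (-p - 1) * u ^ p)) := by ring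
    _ = (p - 1) ^ (1 / p) * (1 - u ^ p) ^ (-(1 / p)) := by
        rw [h3, Real.rpow_neg_one, mul_inv_cancel₀ hu0.ne', mul_one]

lemma LL_eq : LL p = ∫ u in Ioo (0:ℝ) 1, (p - 1) ^ (1 / p) * (1 - u ^ p) ^ (-(1 / p)) := by
  have h := integral_image_eq_integral_abs_deriv_smul measurableSet_Ioo
    (fun u hu => (phi_hasDeriv hp hu).hasDerivWithinAt) (phi_inj hp) (gg p)
  rw [phi_image hp] at h
  rw [LL, h]
  refine setIntegral_congr_fun measurableSet_Ioo fun u hu => ?_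
  rw [smul_eq_mul, integrand_eq hp hu]

lemma pip_half :
    pip p / 2 = ∫ u in Ioo (0:ℝ) 1, (p - 1) ^ (1 / p) * (1 - u ^ p) ^ (-(1 / p)) := by
  have hR : (0:ℝ) < (p - 1) ^ (1 / p) := Real.rpow_pos_of_pos (hp1 hp) _
  have h1 : pip p / 2 = ∫ t in Ioo (0:ℝ) ((p - 1) ^ (1 / p)), (1 - t ^ p / (p - 1)) ^ (-(1 / p)) := by
    rw [pip, intervalIntegral.integral_of_le hR.le, integral_Ioc_eq_integral_Ioo]
    ring
  have himg : (fun u : ℝ => (p - 1) ^ (1 / p) * u) '' Ioo 0 1 = Ioo 0 ((p - 1) ^ (1 / p)) := by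
    rw [image_mul_left_Ioo hR, mul_zero, mul_one]
  have h2 := integral_image_eq_integral_abs_deriv_smul measurableSet_Ioo
    (f := fun u : ℝ => (p - 1) ^ (1 / p) * u) (f' := fun _ => (p - 1) ^ (1 / p))
    (fun u _ => by
      simpa using ((hasDerivAt_id u).const_mul ((p - 1) ^ (1 / p))).hasDerivWithinAt
        (s := Ioo (0:ℝ) 1))
    (fun u1 _ u2 _ h => mul_left_cancel₀ hR.ne' h)
    (fun t => (1 - t ^ p / (p - 1)) ^ (-(1 / p)))
  rw [himg] at h2
  rw [h1, h2]
  refine setIntegral_congr_fun measurableSet_Ioo fun u hu => ?_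
  have h3 : ((p - 1) ^ (1 / p) * u) ^ p = (p - 1) * u ^ p := by
    rw [Real.mul_rpow hR.le hu.1.le, ← Real.rpow_mul (hp1 hp).le,
      one_div, inv_mul_cancel₀ (hp0 hp).ne', Real.rpow_one]
  rw [smul_eq_mul, abs_of_pos hR, h3, mul_div_cancel_left₀ _ (hp1 hp).ne']

lemma pip_eq : pip p / 2 = LL p := by rw [pip_half hp, LL_eq hp]

end pipid
section mainaux

variable {p : ℝ} (hp : 1 < p)
include hp

/-- Derivative of `y ↦ |y| ^ p` for `p > 1`. -/
lemma hasDerivAt_abspow (x : ℝ) :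
    HasDerivAt (fun y : ℝ => |y| ^ p) (p * |x| ^ (p - 1) * Real.sign x) x := by
  rcases lt_trichotomy x 0 with hx | rfl | hx
  · have h1 : HasDerivAt (fun y : ℝ => (-y) ^ p) (p * (-x) ^ (p - 1) * (-1)) x := by
      have h0 : HasDerivAt (fun y : ℝ => y ^ p) (p * (-x) ^ (p - 1)) (-x) :=
        Real.hasDerivAt_rpow_const (Or.inl (neg_ne_zero.2 hx.ne))
      have := h0.comp x (hasDerivAt_neg x)
      simpa [Function.comp_def] using this
    have heq : (fun y : ℝ => |y| ^ p) =ᶠ[𝓝 x] fun y => (-y) ^ p := by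
      filter_upwards [Iio_mem_nhds hx] with y hy
      rw [abs_of_neg hy]
    have h2 := h1.congr_of_eventuallyEq heq
    rw [Real.sign_of_neg hx, abs_of_neg hx]
    convert h2 using 1
  · rw [Real.sign_zero, mul_zero]
    rw [hasDerivAt_iff_tendsto_slope]
    apply squeeze_zero_norm' (a := fun y : ℝ => |y| ^ (p - 1))
    · filter_upwards [self_mem_nhdsWithin] with y hy
      have hy0 : y ≠ 0 := hy
      have hyabs : (0:ℝ) < |y| := abs_pos.2 hy0
      rw [slope_def_field]
      rw [abs_zero, Real.zero_rpow (hp0 hp).ne', sub_zero, sub_zero]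
      rw [Real.norm_eq_abs, abs_div, abs_of_nonneg (Real.rpow_nonneg (abs_nonneg y) p)]
      rw [show |y| ^ (p - 1) = |y| ^ p / |y| by rw [Real.rpow_sub hyabs, Real.rpow_one]]
    · have hc : ContinuousAt (fun y : ℝ => |y| ^ (p - 1)) 0 := by
        have h := (Real.continuousAt_rpow_const (|(0:ℝ)|) (p - 1)
          (Or.inr (by linarith))).comp continuous_abs.continuousAt
        simpa [Function.comp_def] using h
      have h2 := hc.tendsto.mono_left (nhdsWithin_le_nhds (s := {(0:ℝ)}ᶜ))
      simpa [abs_zero, Real.zero_rpow (sub_ne_zero.2 hp.ne')] using h2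
  · have h1 : HasDerivAt (fun y : ℝ => y ^ p) (p * x ^ (p - 1)) x :=
      Real.hasDerivAt_rpow_const (Or.inl hx.ne')
    have heq : (fun y : ℝ => |y| ^ p) =ᶠ[𝓝 x] fun y => y ^ p := by
      filter_upwards [Ioi_mem_nhds hx] with y hy
      rw [abs_of_pos hy]
    have h2 := h1.congr_of_eventuallyEq heq
    rw [Real.sign_of_pos hx, abs_of_pos hx]
    rw [mul_one]
    exact h2

end mainaux

end OneDP

set_option maxHeartbeats 1000000 in
/-- **One-dimensional Poincaré inequality with mixed boundary behaviour** (Section 2.4):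
for `f` of class `C¹` on `[0, π_p/2]` with `f(π_p/2) = 0`,
`∫₀^{π_p/2} |f'|^p ≥ ∫₀^{π_p/2} |f|^p`; i.e. the first eigenvalue of the 1-d `p`-Laplacian
on `[0, π_p/2]` with `u'(0) = 0`, `u(π_p/2) = 0` equals `1`. -/
theorem one_dimensional_poincare_mixed_bc
    (p : ℝ) (hp : 1 < p) (f f' : ℝ → ℝ)
    (hf' : ∀ t ∈ Icc (0:ℝ) (pip p / 2), HasDerivWithinAt f (f' t) (Icc 0 (pip p / 2)) t)
    (hf'c : ContinuousOn f' (Icc 0 (pip p / 2)))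
    (hf0 : f (pip p / 2) = 0) :
    ∫ t in (0:ℝ)..(pip p / 2), |f' t| ^ p ≥ ∫ t in (0:ℝ)..(pip p / 2), |f t| ^ p := by
  classical
  rw [OneDP.pip_eq hp] at hf' hf'c hf0 ⊢
  have hL0 : 0 < OneDP.LL p := OneDP.LL_pos hp
  have hp0' : (0:ℝ) < p := OneDP.hp0 hp
  have hp1' : (0:ℝ) < p - 1 := OneDP.hp1 hp
  have hfc : ContinuousOn f (Icc 0 (OneDP.LL p)) := fun t ht => (hf' t ht).continuousWithinAt
  have habs : Continuous (fun x : ℝ => |x| ^ p) :=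
    continuous_abs.rpow_const fun x => Or.inr hp0'.le
  have hd1 : ContinuousOn (fun t => |f' t| ^ p) (Icc 0 (OneDP.LL p)) :=
    habs.comp_continuousOn hf'c
  have hd2 : ContinuousOn (fun t => |f t| ^ p) (Icc 0 (OneDP.LL p)) :=
    habs.comp_continuousOn hfc
  have hdiffc : ContinuousOn (fun t => |f' t| ^ p - |f t| ^ p) (Icc 0 (OneDP.LL p)) :=
    hd1.sub hd2
  have hint : ∀ (g : ℝ → ℝ), ContinuousOn g (Icc 0 (OneDP.LL p)) → ∀ T ∈ Icc (0:ℝ) (OneDP.LL p),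
      IntervalIntegrable g volume 0 T := by
    intro g hg T hT
    refine (hg.mono ?_).intervalIntegrable
    rw [uIcc_of_le hT.1]
    exact Icc_subset_Icc le_rfl hT.2
  obtain ⟨C, hC⟩ :=
    (isCompact_Icc : IsCompact (Icc (0:ℝ) (OneDP.LL p))).exists_bound_of_continuousOn hf'c
  have hM0 : (0:ℝ) ≤ max C 0 := le_max_right _ _
  have hM : ∀ t ∈ Icc (0:ℝ) (OneDP.LL p), |f' t| ≤ max C 0 := fun t ht =>
    le_trans (by simpa using hC t ht) (le_max_left _ _)
  -- pointwise bound on f near the right endpoint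
  have hfT : ∀ T ∈ Icc (0:ℝ) (OneDP.LL p), |f T| ≤ max C 0 * (OneDP.LL p - T) := by
    intro T hT
    have hTL : T ≤ OneDP.LL p := hT.2
    have hci : ContinuousOn f' (uIcc T (OneDP.LL p)) := by
      rw [uIcc_of_le hTL]; exact hf'c.mono (Icc_subset_Icc hT.1 le_rfl)
    have heq : ∫ t in T..(OneDP.LL p), f' t = f (OneDP.LL p) - f T := by
      refine intervalIntegral.integral_eq_sub_of_hasDeriv_right_of_le hTL
        (hfc.mono (Icc_subset_Icc hT.1 le_rfl)) (fun x hx => ?_) hci.intervalIntegrable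
      have hx' : x ∈ Ioo (0:ℝ) (OneDP.LL p) := ⟨lt_of_le_of_lt hT.1 hx.1, hx.2⟩
      exact ((hf' x (Ioo_subset_Icc_self hx')).hasDerivAt
        (Icc_mem_nhds hx'.1 hx'.2)).hasDerivWithinAt
    have hnorm : ‖∫ t in T..(OneDP.LL p), f' t‖ ≤ max C 0 * |OneDP.LL p - T| := by
      refine intervalIntegral.norm_integral_le_of_norm_le_const fun x hx => ?_
      rw [uIoc_of_le hTL] at hx
      simpa using hM x ⟨le_trans hT.1 hx.1.le, hx.2⟩
    rw [heq, hf0, zero_sub, norm_neg, Real.norm_eq_abs,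
      abs_of_nonneg (sub_nonneg.2 hTL)] at hnorm
    exact hnorm
  -- the key estimate on subintervals
  have key : ∀ T ∈ Ioo (0:ℝ) (OneDP.LL p),
      -((max C 0) ^ p * (OneDP.LL p - T)) ≤ ∫ t in (0:ℝ)..T, (|f' t| ^ p - |f t| ^ p) := by
    intro T hT
    have hTmem : T ∈ Icc (0:ℝ) (OneDP.LL p) := ⟨hT.1.le, hT.2.le⟩
    have hderivΨ : ∀ t ∈ Ioo (0:ℝ) T,
        HasDerivAt (fun u => (∫ s in (0:ℝ)..u, (|f' s| ^ p - |f s| ^ p))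
            + |f u| ^ p * OneDP.ww p u)
          ((|f' t| ^ p - |f t| ^ p) + ((p * |f t| ^ (p - 1) * Real.sign (f t) * f' t)
              * OneDP.ww p t
            + |f t| ^ p * (1 + (p - 1) * OneDP.ww p t ^ (p / (p - 1))))) t := by
      intro t ht
      have htL : t ∈ Ioo (0:ℝ) (OneDP.LL p) := ⟨ht.1, ht.2.trans hT.2⟩
      have hmem : Icc (0:ℝ) (OneDP.LL p) ∈ 𝓝 t := Icc_mem_nhds htL.1 htL.2
      have hfd : HasDerivAt f (f' t) t :=
        (hf' t (Ioo_subset_Icc_self htL)).hasDerivAt hmem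
      have h1 : HasDerivAt (fun u => ∫ s in (0:ℝ)..u, (|f' s| ^ p - |f s| ^ p))
          (|f' t| ^ p - |f t| ^ p) t := by
        refine intervalIntegral.integral_hasDerivAt_right
          (hint _ hdiffc t (Ioo_subset_Icc_self htL)) ?_ ?_
        · exact ContinuousOn.stronglyMeasurableAtFilter isOpen_Ioo
            (hdiffc.mono Ioo_subset_Icc_self) t htL
        · exact (hdiffc t (Ioo_subset_Icc_self htL)).continuousAt hmem
      have h2 : HasDerivAt (fun u => |f u| ^ p)
          (p * |f t| ^ (p - 1) * Real.sign (f t) * f' t) t :=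
        (OneDP.hasDerivAt_abspow hp (f t)).comp t hfd
      have h3 : HasDerivAt (OneDP.ww p)
          (1 + (p - 1) * OneDP.ww p t ^ (p / (p - 1))) t := OneDP.ww_deriv hp htL
      exact h1.add (h2.mul h3)
    have hnonneg : ∀ t ∈ Ioo (0:ℝ) T,
        0 ≤ (|f' t| ^ p - |f t| ^ p) + ((p * |f t| ^ (p - 1) * Real.sign (f t) * f' t)
              * OneDP.ww p t
            + |f t| ^ p * (1 + (p - 1) * OneDP.ww p t ^ (p / (p - 1)))) := by
      intro t ht
      have htL : t ∈ Ioo (0:ℝ) (OneDP.LL p) := ⟨ht.1, ht.2.trans hT.2⟩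
      have hW0 : 0 ≤ OneDP.ww p t := OneDP.ww_nonneg hp (Ioo_subset_Ico_self htL)
      have ha0 : (0:ℝ) ≤ |f' t| := abs_nonneg _
      have hb0 : (0:ℝ) ≤ |f t| := abs_nonneg _
      have hbp0 : 0 ≤ |f t| ^ (p - 1) := Real.rpow_nonneg hb0 _
      have hy := Real.young_inequality_of_nonneg ha0 (mul_nonneg hbp0 hW0) (OneDP.conj hp)
      have hBq : (|f t| ^ (p - 1) * OneDP.ww p t) ^ (p / (p - 1))
          = |f t| ^ p * OneDP.ww p t ^ (p / (p - 1)) := by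
        rw [Real.mul_rpow hbp0 hW0, ← Real.rpow_mul hb0,
          show (p - 1) * (p / (p - 1)) = p by
            rw [mul_comm]; exact div_mul_cancel₀ p (sub_ne_zero.2 hp.ne')]
      have hq' : p / (p / (p - 1)) = p - 1 := by
        rw [div_div_eq_mul_div, mul_comm, mul_div_assoc, div_self hp0'.ne', mul_one]
      have hYoung : p * (|f' t| * (|f t| ^ (p - 1) * OneDP.ww p t))
          ≤ |f' t| ^ p + (p - 1) * (|f t| ^ p * OneDP.ww p t ^ (p / (p - 1))) := by
        have h5 := mul_le_mul_of_nonneg_left hy hp0'.le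
        rw [mul_add, mul_div_cancel₀ _ hp0'.ne', hBq] at h5
        calc p * (|f' t| * (|f t| ^ (p - 1) * OneDP.ww p t)) ≤ |f' t| ^ p
            + p * (|f t| ^ p * OneDP.ww p t ^ (p / (p - 1)) / (p / (p - 1))) := h5
          _ = |f' t| ^ p + (p - 1) * (|f t| ^ p * OneDP.ww p t ^ (p / (p - 1))) := by
            rw [show p * (|f t| ^ p * OneDP.ww p t ^ (p / (p - 1)) / (p / (p - 1)))
              = (p / (p / (p - 1))) * (|f t| ^ p * OneDP.ww p t ^ (p / (p - 1))) by ring, hq']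
      have hsign : -|f' t| ≤ Real.sign (f t) * f' t := by
        have hsle : |Real.sign (f t)| ≤ 1 := by
          rcases lt_trichotomy (f t) 0 with h | h | h
          · simp [Real.sign_of_neg h]
          · simp [h, Real.sign_zero]
          · simp [Real.sign_of_pos h]
        have h6 : |Real.sign (f t) * f' t| ≤ |f' t| := by
          rw [abs_mul]
          nlinarith [abs_nonneg (f' t)]
        linarith [(abs_le.1 h6).1, neg_abs_le (Real.sign (f t) * f' t)]
      have hc0 : 0 ≤ p * |f t| ^ (p - 1) * OneDP.ww p t :=
        mul_nonneg (mul_nonneg hp0'.le hbp0) hW0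
      have h7 := mul_le_mul_of_nonneg_left hsign hc0
      nlinarith [hYoung, h7]
    have hΨcont : ContinuousOn (fun u => (∫ s in (0:ℝ)..u, (|f' s| ^ p - |f s| ^ p))
        + |f u| ^ p * OneDP.ww p u) (Icc 0 T) := by
      apply ContinuousOn.add
      · have hii : IntervalIntegrable (fun s => |f' s| ^ p - |f s| ^ p) volume 0 T :=
          hint _ hdiffc T hTmem
        have h := intervalIntegral.continuousOn_primitive_interval' hii left_mem_uIcc
        rwa [uIcc_of_le hT.1.le] at h
      · apply ContinuousOn.mul
        · exact habs.comp_continuousOn (hfc.mono (Icc_subset_Icc le_rfl hT.2.le))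
        · intro t ht
          rcases eq_or_lt_of_le ht.1 with h0 | h0
          · rw [← h0]
            exact (OneDP.ww_cont0 hp).mono fun x hx => hx.1
          · exact (OneDP.ww_contAt hp ⟨h0, lt_of_le_of_lt ht.2 hT.2⟩).continuousWithinAt
    have hmono : MonotoneOn (fun u => (∫ s in (0:ℝ)..u, (|f' s| ^ p - |f s| ^ p))
        + |f u| ^ p * OneDP.ww p u) (Icc 0 T) := by
      apply monotoneOn_of_deriv_nonneg (convex_Icc 0 T) hΨcont
      · rw [interior_Icc]
        exact fun t ht => ((hderivΨ t ht).differentiableAt).differentiableWithinAt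
      · rw [interior_Icc]
        intro t ht
        rw [(hderivΨ t ht).deriv]
        exact hnonneg t ht
    have h0T := hmono (left_mem_Icc.2 hT.1.le) (right_mem_Icc.2 hT.1.le) hT.1.le
    dsimp only at h0T
    rw [intervalIntegral.integral_same] at h0T
    rw [OneDP.ww_zero hp, mul_zero, zero_add] at h0T
    have hbb : |f T| ^ p * OneDP.ww p T ≤ (max C 0) ^ p * (OneDP.LL p - T) := by
      have hLT : 0 < OneDP.LL p - T := sub_pos.2 hT.2
      have h1 : |f T| ^ p ≤ (max C 0 * (OneDP.LL p - T)) ^ p :=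
        Real.rpow_le_rpow (abs_nonneg _) (hfT T hTmem) hp0'.le
      have h2 : OneDP.ww p T ≤ (OneDP.LL p - T) ^ (-(p - 1)) := OneDP.ww_bound hp hT
      have h3 : 0 ≤ OneDP.ww p T := OneDP.ww_nonneg hp (Ioo_subset_Ico_self hT)
      calc |f T| ^ p * OneDP.ww p T
          ≤ (max C 0 * (OneDP.LL p - T)) ^ p * (OneDP.LL p - T) ^ (-(p - 1)) :=
          mul_le_mul h1 h2 h3 (Real.rpow_nonneg (mul_nonneg hM0 hLT.le) _)
        _ = (max C 0) ^ p * (OneDP.LL p - T) := by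
          rw [Real.mul_rpow hM0 hLT.le, mul_assoc, ← Real.rpow_add hLT,
            show p + -(p - 1) = 1 by ring, Real.rpow_one]
    linarith
  -- limiting argument
  have hprim : ContinuousOn (fun T => ∫ t in (0:ℝ)..T, (|f' t| ^ p - |f t| ^ p))
      (Icc 0 (OneDP.LL p)) := by
    have hii : IntervalIntegrable (fun s => |f' s| ^ p - |f s| ^ p) volume 0 (OneDP.LL p) :=
      hint _ hdiffc (OneDP.LL p) (right_mem_Icc.2 hL0.le)
    have h := intervalIntegral.continuousOn_primitive_interval' hii left_mem_uIcc
    rwa [uIcc_of_le hL0.le] at h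
  have hne : (𝓝[Ioo (0:ℝ) (OneDP.LL p)] (OneDP.LL p)).NeBot := by
    apply mem_closure_iff_nhdsWithin_neBot.1
    rw [closure_Ioo hL0.ne]
    exact right_mem_Icc.2 hL0.le
  have t1 : Tendsto (fun T => ∫ t in (0:ℝ)..T, (|f' t| ^ p - |f t| ^ p))
      (𝓝[Ioo (0:ℝ) (OneDP.LL p)] (OneDP.LL p))
      (𝓝 (∫ t in (0:ℝ)..(OneDP.LL p), (|f' t| ^ p - |f t| ^ p))) :=
    (hprim (OneDP.LL p) (right_mem_Icc.2 hL0.le)).mono_left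
      (nhdsWithin_mono _ Ioo_subset_Icc_self)
  have t2 : Tendsto (fun T : ℝ => -((max C 0) ^ p * (OneDP.LL p - T)))
      (𝓝[Ioo (0:ℝ) (OneDP.LL p)] (OneDP.LL p)) (𝓝 0) := by
    have hcont : Continuous (fun T : ℝ => -((max C 0) ^ p * (OneDP.LL p - T))) := by
      fun_prop
    have h := (hcont.tendsto (OneDP.LL p)).mono_left
      (nhdsWithin_le_nhds (s := Ioo (0:ℝ) (OneDP.LL p)))
    rw [show -((max C 0) ^ p * (OneDP.LL p - OneDP.LL p)) = 0 by
      rw [sub_self, mul_zero, neg_zero]] at h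
    exact h
  have h0 : (0:ℝ) ≤ ∫ t in (0:ℝ)..(OneDP.LL p), (|f' t| ^ p - |f t| ^ p) := by
    refine le_of_tendsto_of_tendsto t2 t1 ?_
    filter_upwards [self_mem_nhdsWithin] with T hT
    exact key T hT
  rw [intervalIntegral.integral_sub (hint _ hd1 (OneDP.LL p) (right_mem_Icc.2 hL0.le))
    (hint _ hd2 (OneDP.LL p) (right_mem_Icc.2 hL0.le))] at h0
  linarith
end
end
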